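/- Define γ̃(h) = arccot(sinh h) and β̃(h) = (γ̃(h−1) − γ̃(h+1))/2 for h > 1. Then lim_{h→∞} β̃(h)/γ̃(h) = sinh(1). -/

import Mathlib

/-!
For `x > 0`, `arccot x = arctan x⁻¹ ~ x⁻¹` as `x → ∞`, while `sinh (h + c) / sinh h → exp c`.
Hence `γ̃ (h + c) / γ̃ h → exp (-c)`, and `β̃ h / γ̃ h → (exp 1 - exp (-1)) / 2 = sinh 1`.
-/

open Real Filter

/-- arccot : ℝ → (0,π), the inverse cotangent. -/
noncomputable def arccot (x : ℝ) : ℝ := π / 2 - Real.arctan x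

open Topology

lemma arccot_eq_arctan_inv {x : ℝ} (hx : 0 < x) : arccot x = arctan x⁻¹ :=
  (arctan_inv_of_pos hx).symm

lemma arccot_pos (x : ℝ) : 0 < arccot x :=
  sub_pos.2 (arctan_lt_pi_div_two x)

lemma tendsto_mul_arccot_atTop : Tendsto (fun x => x * arccot x) atTop (𝓝 1) := by
  -- the slope of `arctan` at `0`, read at `t = x⁻¹`
  have hslope : Tendsto (fun t => t⁻¹ * arctan t) (𝓝[≠] 0) (𝓝 1) := by
    simpa using hasDerivAt_iff_tendsto_slope_zero.1 (hasDerivAt_arctan 0)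
  have hinv : Tendsto (fun x : ℝ => x⁻¹) atTop (𝓝[≠] 0) :=
    tendsto_inv_atTop_nhdsGT_zero.mono_right (nhdsWithin_mono _ fun _ hx => ne_of_gt hx)
  refine (hslope.comp hinv).congr' ?_
  filter_upwards [eventually_gt_atTop 0] with x hx
  simp [arccot_eq_arctan_inv hx]

lemma tendsto_arccot_div_arccot {α : Type*} {l : Filter α} {u v : α → ℝ} {L : ℝ}
    (hu : Tendsto u l atTop) (hv : Tendsto v l atTop)
    (huv : Tendsto (fun a => u a / v a) l (𝓝 L)) (hL : L ≠ 0) :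
    Tendsto (fun a => arccot (u a) / arccot (v a)) l (𝓝 L⁻¹) := by
  have := ((tendsto_mul_arccot_atTop.comp hu).div (tendsto_mul_arccot_atTop.comp hv)
    one_ne_zero).div huv hL
  rw [div_one, one_div] at this
  refine this.congr' ?_
  filter_upwards [hu.eventually_gt_atTop 0, hv.eventually_gt_atTop 0] with a hua hva
  simp only [Pi.div_apply, Function.comp_apply]
  field_simp [(arccot_pos (v a)).ne']

lemma sinh_add_eq_exp_mul_sinh_add (x c : ℝ) :
    sinh (x + c) = exp c * sinh x + sinh c * exp (-x) := by
  simp only [sinh_eq, exp_add, exp_neg]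
  field_simp
  ring

lemma tendsto_sinh_atTop : Tendsto sinh atTop atTop :=
  tendsto_atTop_mono' _ ((eventually_ge_atTop 0).mono fun _ => self_le_sinh_iff.2) tendsto_id

lemma tendsto_sinh_add_div_sinh (c : ℝ) :
    Tendsto (fun x => sinh (x + c) / sinh x) atTop (𝓝 (exp c)) := by
  have hdecay : Tendsto (fun x => exp (-x) / sinh x) atTop (𝓝 0) := by
    simpa [div_eq_mul_inv] using tendsto_exp_neg_atTop_nhds_zero.mul
      (tendsto_inv_atTop_zero.comp tendsto_sinh_atTop)
  have := (hdecay.const_mul (sinh c)).const_add (exp c)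
  rw [mul_zero, add_zero] at this
  refine this.congr' ?_
  filter_upwards [eventually_gt_atTop 0] with x hx
  rw [sinh_add_eq_exp_mul_sinh_add]
  field_simp [(sinh_pos_iff.2 hx).ne']

lemma tendsto_arccot_sinh_add_div_arccot_sinh (c : ℝ) :
    Tendsto (fun h => arccot (sinh (h + c)) / arccot (sinh h)) atTop (𝓝 (exp (-c))) := by
  rw [exp_neg]
  exact tendsto_arccot_div_arccot
    (tendsto_sinh_atTop.comp (tendsto_atTop_add_const_right _ c tendsto_id))
    tendsto_sinh_atTop (tendsto_sinh_add_div_sinh c) (exp_ne_zero c)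

/-- With γ̃(h) = arccot(sinh h) and β̃(h) = (γ̃(h-1) - γ̃(h+1))/2 for h > 1,
one has lim_{h→∞} β̃(h)/γ̃(h) = sinh(1). -/
theorem beta_gamma_ratio_tendsto_sinh_one :
    Tendsto (fun h : ℝ =>
      ((arccot (Real.sinh (h - 1)) - arccot (Real.sinh (h + 1))) / 2)
        / arccot (Real.sinh h)) atTop (nhds (Real.sinh 1)) := by
  have hlim := ((tendsto_arccot_sinh_add_div_arccot_sinh (-1)).sub
    (tendsto_arccot_sinh_add_div_arccot_sinh 1)).div_const 2
  rw [neg_neg, ← sinh_eq] at hlim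
  refine hlim.congr fun x => ?_
  rw [← sub_eq_add_neg]
  ring
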